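/- Let R be a complete local UFD with residue characteristic ≠ 2 and ρ: G → Aut_K(V) a 2-dimensional irreducible representation satisfying (Lat-fr), (Red), (G-dist). Suppose T ⊆ T' are stable free lattices with T'/T a cyclic R-module on which G acts through a character lifting ψ (with T'(ψ') denoting the ψ'-component). Then T(ψ') = T'(ψ') and ∏ᵢ 𝔭ᵢ^{aᵢ} T'(ψ) = T(ψ) where char_R(T'/T) = ∏ᵢ 𝔭ᵢ^{aᵢ}; that is, the 'odd' component of the lattice is unchanged and only the ψ-component shrinks. -/

import Mathlib

/-!
Cayley–Hamilton makes the eigenprojectors `π = eigProj λψ λψ'` and `π' = eigProj λψ' λψ` of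
`ρ g₀` complementary idempotents, and they have coefficients in `R` because `λψ - λψ'` is a
unit; so every `ρ g₀`-stable lattice `S` splits as `π S ⊕ π' S`. On `T'/T`, `ρ g₀` acts by
`t g₀ ≡ λψ`, so `π' = (λψ' - λψ)⁻¹ (ρ g₀ - λψ)` maps `T'` into `π' T + 𝔪 π' T'` and Nakayama
gives `π' T = π' T'`. The summand `π T'` of the free module `T'` is free over the local ring `R`
and lies in the eigenline of `λψ`, hence `π T' = R z`. If `d z ∈ π T`, then `d` kills `T'/T`
(as `d v = d π v + d π' v` and `π' T' = π' T ⊆ T`), so `π T = Ann(T'/T) z = (∏ 𝔭ᵢ^{aᵢ}) π T'`.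
-/

open IsLocalRing

def IsHeightOnePrime {R : Type*} [CommRing R] (p : Ideal R) : Prop :=
  p.IsPrime ∧ p ≠ ⊥ ∧ ∀ q : Ideal R, q.IsPrime → q < p → q = ⊥

/-- The quotient `T'/T` of two lattices `T ≤ T'`, as an `R`-module. -/
abbrev quotMod {R V : Type*} [CommRing R] [AddCommGroup V] [Module R V]
    (T T' : Submodule R V) : Type _ :=
  T' ⧸ Submodule.comap T'.subtype T

/-- The projector `(f - b·id)/(a - b)` onto the `a`-eigenspace of `f`. -/
noncomputable def eigProj (R : Type*) {K V : Type*} [CommRing R] [Field K] [Algebra R K]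
    [AddCommGroup V] [Module K V] (f : V →ₗ[K] V) (a b : R) : V →ₗ[K] V :=
  (algebraMap R K (a - b))⁻¹ • (f - algebraMap R K b • (LinearMap.id : V →ₗ[K] V))

theorem IsLocalRing.isUnit_sub_of_mk_ne {R : Type*} [CommRing R] [IsLocalRing R] {x y : R}
    (h : Ideal.Quotient.mk (maximalIdeal R) x ≠ Ideal.Quotient.mk (maximalIdeal R) y) :
    IsUnit (x - y) :=
  not_not.mp fun hxy => h (Ideal.Quotient.eq.mpr ((mem_maximalIdeal _).mpr hxy))

section EigProj

variable {R K V : Type*} [CommRing R] [Field K] [Algebra R K] [AddCommGroup V] [Module K V]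
  (f : Module.End K V) {a b : R}

theorem Module.End.commute_sub_smul_one (x y : K) : Commute (f - x • 1) (f - y • 1) :=
  ((Commute.refl f).sub_right ((Commute.one_right f).smul_right y)).sub_left
    ((Commute.one_left _).smul_left x)

theorem eigProj_eq : eigProj R f a b = (algebraMap R K (a - b))⁻¹ • (f - algebraMap R K b • 1) :=
  rfl

theorem eigProj_add_eigProj (hab : algebraMap R K (a - b) ≠ 0) :
    eigProj R f a b + eigProj R f b a = 1 := by
  rw [eigProj_eq, eigProj_eq, ← neg_sub a b, map_neg, inv_neg, neg_smul, ← sub_eq_add_neg,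
    ← smul_sub, sub_sub_sub_cancel_left, ← sub_smul, ← map_sub, smul_smul, inv_mul_cancel₀ hab,
    one_smul]

variable {f}

theorem eigProj_mul_eigProj
    (hf : (f - algebraMap R K a • 1) * (f - algebraMap R K b • 1) = 0) :
    eigProj R f b a * eigProj R f a b = 0 := by
  rw [eigProj_eq, eigProj_eq, smul_mul_smul_comm, hf, smul_zero]

theorem sub_smul_one_mul_eigProj
    (hf : (f - algebraMap R K a • 1) * (f - algebraMap R K b • 1) = 0) :
    (f - algebraMap R K a • 1) * eigProj R f a b = 0 := by
  rw [eigProj_eq, mul_smul_comm, hf, smul_zero]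

theorem eigProj_isIdempotentElem (hab : algebraMap R K (a - b) ≠ 0)
    (hf : (f - algebraMap R K b • 1) * (f - algebraMap R K a • 1) = 0) :
    IsIdempotentElem (eigProj R f a b) := by
  unfold IsIdempotentElem
  conv_rhs => rw [← mul_one (eigProj R f a b), ← eigProj_add_eigProj f hab]
  rw [mul_add, eigProj_mul_eigProj hf, add_zero]

variable [Module R V] [IsScalarTower R K V]

theorem eigProj_apply_of_isUnit (h : IsUnit (a - b)) (v : V) :
    eigProj R f a b v = (↑h.unit⁻¹ : R) • (f v - b • v) := by
  have hinv : (algebraMap R K (a - b))⁻¹ = algebraMap R K ↑h.unit⁻¹ := by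
    rw [map_units_inv, h.unit_spec]
  rw [eigProj_eq, LinearMap.smul_apply, hinv, algebraMap_smul,
    LinearMap.sub_apply, LinearMap.smul_apply, algebraMap_smul, Module.End.one_apply]

theorem map_eigProj_le (h : IsUnit (a - b)) {S : Submodule R V} (hS : ∀ v ∈ S, f v ∈ S) :
    S.map ((eigProj R f a b).restrictScalars R) ≤ S := by
  rintro _ ⟨v, hv, rfl⟩
  rw [LinearMap.restrictScalars_apply, eigProj_apply_of_isUnit h]
  exact S.smul_mem _ (sub_mem (hS v hv) (S.smul_mem b hv))

theorem map_eigProj_eq_of_sub_mem_maximalIdeal [IsLocalRing R] {t : R} (hab : IsUnit (b - a))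
    (hf : (f - algebraMap R K a • 1) * (f - algebraMap R K b • 1) = 0) {T T' : Submodule R V}
    (hle : T ≤ T') (hT' : T'.FG) (hact : ∀ v ∈ T', f v - t • v ∈ T)
    (ht : t - a ∈ maximalIdeal R) :
    T.map ((eigProj R f b a).restrictScalars R) = T'.map ((eigProj R f b a).restrictScalars R) := by
  set π := (eigProj R f b a).restrictScalars R
  have hidem : ∀ v, π (π v) = π v :=
    LinearMap.congr_fun (eigProj_isIdempotentElem ((hab.map (algebraMap R K)).ne_zero) hf)
  refine le_antisymm (Submodule.map_mono hle) ?_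
  refine Submodule.le_of_le_smul_of_le_jacobson_bot (hT'.map π)
    (maximalIdeal_le_jacobson ⊥) ?_
  rintro _ ⟨v, hv, rfl⟩
  -- on `T'/T`, `π = (b - a)⁻¹ (f - a)` acts as the scalar `(b - a)⁻¹ (t - a) ∈ 𝔪`
  have key : π v = (↑hab.unit⁻¹ : R) • (π (f v - t • v) + (t - a) • π v) := by
    calc π v = π (π v) := (hidem v).symm
      _ = π ((↑hab.unit⁻¹ : R) • ((f v - t • v) + (t - a) • v)) := by
        rw [LinearMap.restrictScalars_apply _ _ v, eigProj_apply_of_isUnit hab, sub_smul]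
        congr 2; abel
      _ = _ := by rw [map_smul, map_add, map_smul]
  rw [key]
  exact Submodule.smul_mem _ _ (add_mem
    (Submodule.mem_sup_left (Submodule.mem_map_of_mem (hact v hv)))
    (Submodule.mem_sup_right (Submodule.smul_mem_smul ht (Submodule.mem_map_of_mem hv))))

end EigProj

section DimTwo

variable {K V : Type*} [Field K] [AddCommGroup V] [Module K V] {f : Module.End K V} {x y : K}

open Polynomial in
theorem LinearMap.sub_smul_one_mul_sub_smul_one_eq_zero (hV : Module.finrank K V = 2)
    (htr : LinearMap.trace K V f = x + y) (hdet : LinearMap.det f = x * y) :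
    (f - x • 1) * (f - y • 1) = 0 := by
  have : FiniteDimensional K V := .of_finrank_pos (by omega)
  let b := Module.finBasisOfFinrankEq K V hV
  have hchar : f.charpoly = (X - C x) * (X - C y) := by
    rw [← LinearMap.charpoly_toMatrix f b, Matrix.charpoly_fin_two,
      ← LinearMap.trace_eq_matrix_trace, LinearMap.det_toMatrix, htr, hdet]
    simp only [map_add, map_mul]; ring
  simpa [hchar, Algebra.algebraMap_eq_smul_one] using f.aeval_self_charpoly

theorem LinearMap.rank_ker_sub_smul_one_le_one (hV : Module.finrank K V = 2)
    (htr : LinearMap.trace K V f = x + y) (hxy : x ≠ y) :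
    Module.rank K (LinearMap.ker (f - x • 1)) ≤ 1 := by
  have : FiniteDimensional K V := .of_finrank_pos (by omega)
  have hne : LinearMap.ker (f - x • 1) ≠ ⊤ := by
    intro htop
    have hf : f = x • 1 := sub_eq_zero.mp (LinearMap.ker_eq_top.mp htop)
    rw [hf, map_smul, LinearMap.trace_one, hV, smul_eq_mul] at htr
    exact hxy (by linear_combination htr)
  have hlt := Submodule.finrank_lt hne
  rw [← Module.finrank_eq_rank, Nat.cast_le_one]
  omega

end DimTwo

section Lattices

variable {R V : Type*} [CommRing R] [AddCommGroup V] [Module R V]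

theorem mem_annihilator_quotMod_iff {T T' : Submodule R V} {d : R} :
    d ∈ Module.annihilator R (quotMod T T') ↔ ∀ v ∈ T', d • v ∈ T := by
  simp only [Module.mem_annihilator]
  constructor
  · intro hd v hv
    simpa [← Submodule.Quotient.mk_smul, Submodule.Quotient.mk_eq_zero] using
      hd (Submodule.Quotient.mk ⟨v, hv⟩)
  · rintro hd ⟨⟨v, hv⟩⟩
    exact (Submodule.Quotient.mk_eq_zero _).mpr (hd v hv)

theorem annihilator_smul_map_eq {T T' : Submodule R V} (hle : T ≤ T') {π π' : V →ₗ[R] V}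
    (hsplit : ∀ v, π v + π' v = v) (hπT : T.map π ≤ T) (hπ'T' : T'.map π' ≤ T) {z : V}
    (hz : T'.map π = Submodule.span R {z}) :
    Module.annihilator R (quotMod T T') • T'.map π = T.map π := by
  apply le_antisymm
  · refine Submodule.smul_le.mpr ?_
    rintro d hd _ ⟨v, hv, rfl⟩
    exact ⟨d • v, mem_annihilator_quotMod_iff.mp hd v hv, map_smul π d v⟩
  · intro n hn
    obtain ⟨d, rfl⟩ := Submodule.mem_span_singleton.mp (hz ▸ Submodule.map_mono hle hn)
    have hdz : d • z ∈ T := hπT hn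
    refine Submodule.smul_mem_smul (mem_annihilator_quotMod_iff.mpr fun v hv => ?_)
      (hz ▸ Submodule.mem_span_singleton_self z)
    obtain ⟨d', hd'⟩ := Submodule.mem_span_singleton.mp (hz ▸ Submodule.mem_map_of_mem hv)
    rw [← hsplit v, smul_add, ← hd', smul_comm]
    exact add_mem (T.smul_mem d' hdz) (T.smul_mem d (hπ'T' (Submodule.mem_map_of_mem hv)))

theorem Module.free_map_of_isIdempotentElem [IsLocalRing R] {M : Submodule R V} [Module.Free R M]
    (hM : M.FG) {π : V →ₗ[R] V} (hπ : IsIdempotentElem π) (hπM : M.map π ≤ M) :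
    Module.Free R (M.map π) := by
  have : Module.Finite R (M.map π) := Module.Finite.iff_fg.mpr (hM.map π)
  have : Module.Projective R (M.map π) :=
    .of_split (Submodule.inclusion hπM) ((π.comp M.subtype).codRestrict _ fun x => ⟨x, x.2, rfl⟩)
      (LinearMap.ext fun ⟨_, v, _, hv⟩ => Subtype.ext (hv ▸ LinearMap.congr_fun hπ v))
  have : Module.FinitePresentation R (M.map π) := Module.finitePresentation_of_projective _ _
  exact Module.free_of_flat_of_isLocalRing

theorem Submodule.isPrincipal_of_le_of_rank_le_one [Nontrivial R] {K : Type*} [Field K]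
    [Algebra R K] [IsFractionRing R K] [Module K V] [IsScalarTower R K V] (M : Submodule R V)
    [Module.Free R M] (W : Submodule K V) (hW : Module.rank K W ≤ 1)
    (hMW : M ≤ W.restrictScalars R) : M.IsPrincipal := by
  rw [← Submodule.rank_le_one_iff_isPrincipal]
  obtain ⟨ι, b⟩ := Module.Free.exists_basis (R := R) (M := M)
  have hK : LinearIndependent K fun i => ((b i : M) : V) :=
    (b.linearIndependent.map' M.subtype M.ker_subtype).localization K (nonZeroDivisors R)
  have hW' : LinearIndependent K fun i => (⟨b i, hMW (b i).2⟩ : W) :=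
    .of_comp W.subtype hK
  exact b.mk_eq_rank''.symm.le.trans (hW'.cardinal_le_rank.trans hW)

end Lattices

theorem eigcomponents_of_sublattice_general
    {R K V G : Type*} [CommRing R] [IsLocalRing R]
    [Field K] [Algebra R K] [IsFractionRing R K]
    [AddCommGroup V] [Module K V] [Module R V] [IsScalarTower R K V] [Group G]
    (hdim : Module.finrank K V = 2)
    (ρ : Representation K G V)
    (tr : G → R) (htr : ∀ g, algebraMap R K (tr g) = LinearMap.trace K V (ρ g))
    (ψ ψ' : G →* (R ⧸ maximalIdeal R)ˣ)
    (g₀ : G) (hg₀ : ψ g₀ ≠ ψ' g₀)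
    (lamψ lamψ' : R)
    (hsum : lamψ + lamψ' = tr g₀)
    (hprod : algebraMap R K (lamψ * lamψ') = LinearMap.det (ρ g₀))
    (hlift : Ideal.Quotient.mk (maximalIdeal R) lamψ = (ψ g₀ : R ⧸ maximalIdeal R))
    (hlift' : Ideal.Quotient.mk (maximalIdeal R) lamψ' = (ψ' g₀ : R ⧸ maximalIdeal R))
    (r : ℕ) (p : Fin r → Ideal R)
    (a : Fin r → ℕ)
    (T T' : Submodule R V)
    (hTstab : ∀ g : G, ∀ v ∈ T, ρ g v ∈ T)
    (hT'fg : T'.FG)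
    (hT'stab : ∀ g : G, ∀ v ∈ T', ρ g v ∈ T') (hT'free : Module.Free R T')
    (hle : T ≤ T')
    -- `G` acts on `T'/T` through a character lifting `ψ`, via the lift `t : G → R`:
    (t : G → R)
    (htlift : ∀ g, Ideal.Quotient.mk (maximalIdeal R) (t g)
      = (ψ g : R ⧸ maximalIdeal R))
    (hact : ∀ g : G, ∀ v ∈ T', ρ g v - t g • v ∈ T)
    -- `char_R(T'/T) = ∏ᵢ pᵢ^{aᵢ}`:
    (hchariso : Nonempty (quotMod T T' ≃ₗ[R] R ⧸ (∏ i, (p i) ^ (a i) : Ideal R))) :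
    Submodule.map ((eigProj R (ρ g₀) lamψ' lamψ).restrictScalars R) T
      = Submodule.map ((eigProj R (ρ g₀) lamψ' lamψ).restrictScalars R) T' ∧
    (∏ i, (p i) ^ (a i) : Ideal R) •
        Submodule.map ((eigProj R (ρ g₀) lamψ lamψ').restrictScalars R) T'
      = Submodule.map ((eigProj R (ρ g₀) lamψ lamψ').restrictScalars R) T := by
  obtain ⟨e⟩ := hchariso
  set f := ρ g₀
  set π := (eigProj R f lamψ lamψ').restrictScalars R
  have hunit : IsUnit (lamψ - lamψ') :=
    isUnit_sub_of_mk_ne (by rw [hlift, hlift']; exact Units.val_injective.ne hg₀)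
  have hunit' : IsUnit (lamψ' - lamψ) := neg_sub lamψ lamψ' ▸ hunit.neg
  have hK : algebraMap R K (lamψ - lamψ') ≠ 0 := (hunit.map _).ne_zero
  have htrf : LinearMap.trace K V f = algebraMap R K lamψ + algebraMap R K lamψ' := by
    rw [← map_add, hsum, htr]
  have hf : (f - algebraMap R K lamψ • 1) * (f - algebraMap R K lamψ' • 1) = 0 :=
    LinearMap.sub_smul_one_mul_sub_smul_one_eq_zero hdim htrf (by rw [← map_mul, hprod])
  have hf' : (f - algebraMap R K lamψ' • 1) * (f - algebraMap R K lamψ • 1) = 0 :=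
    (Module.End.commute_sub_smul_one f _ _).eq ▸ hf
  have hψ' := map_eigProj_eq_of_sub_mem_maximalIdeal hunit' hf hle hT'fg (hact g₀)
    (Ideal.Quotient.eq.mp ((htlift g₀).trans hlift.symm))
  have : Module.Free R (T'.map π) :=
    Module.free_map_of_isIdempotentElem hT'fg
      (LinearMap.ext fun v => LinearMap.congr_fun (eigProj_isIdempotentElem hK hf').eq v)
      (map_eigProj_le hunit (hT'stab g₀))
  obtain ⟨z, hz⟩ := (T'.map π).isPrincipal_of_le_of_rank_le_one
    (LinearMap.ker (f - algebraMap R K lamψ • 1))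
    (LinearMap.rank_ker_sub_smul_one_le_one hdim htrf (sub_ne_zero.mp (by rwa [← map_sub])))
    (by rintro _ ⟨v, -, rfl⟩; exact LinearMap.congr_fun (sub_smul_one_mul_eigProj hf) v)
  have hann : Module.annihilator R (quotMod T T') = ∏ i, p i ^ a i := by
    rw [e.annihilator_eq, Ideal.annihilator_quotient]
  refine ⟨hψ', hann ▸ annihilator_smul_map_eq hle ?_ (map_eigProj_le hunit (hTstab g₀))
    (hψ' ▸ map_eigProj_le hunit' (hTstab g₀)) hz⟩
  exact LinearMap.congr_fun (eigProj_add_eigProj f hK)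

/-- Let `R` be a complete local UFD of residue characteristic `≠ 2` and
`ρ` two-dimensional irreducible, residually disjoint reducible, with a stable free
lattice. Suppose `T ⊆ T'` are stable free lattices with `T'/T` a cyclic `R`-module on
which `G` acts through a character lifting `ψ` (via a lift `t : G → R`), and with
`char_R(T'/T) = ∏ᵢ pᵢ^{aᵢ}` (i.e. `T'/T ≅ R/∏ᵢ pᵢ^{aᵢ}`). Then `T(ψ') = T'(ψ')` and
`(∏ᵢ pᵢ^{aᵢ}) • T'(ψ) = T(ψ)`: the `ψ'`-component is unchanged and only the
`ψ`-component shrinks. -/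
theorem eigcomponents_of_sublattice
    {R K V G : Type*} [CommRing R] [IsDomain R] [IsLocalRing R]
    [UniqueFactorizationMonoid R] [IsAdicComplete (maximalIdeal R) R]
    [Field K] [Algebra R K] [IsFractionRing R K]
    [AddCommGroup V] [Module K V] [Module R V] [IsScalarTower R K V] [Group G]
    (hchar : ringChar (R ⧸ maximalIdeal R) ≠ 2)
    (hdim : Module.finrank K V = 2)
    (ρ : Representation K G V)
    (hirr : ∀ W : Submodule K V, (∀ g : G, ∀ v ∈ W, ρ g v ∈ W) → W = ⊥ ∨ W = ⊤)
    (tr : G → R) (htr : ∀ g, algebraMap R K (tr g) = LinearMap.trace K V (ρ g))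
    (ψ ψ' : G →* (R ⧸ maximalIdeal R)ˣ) (hdist : ψ ≠ ψ')
    (hred : ∀ g, Ideal.Quotient.mk (maximalIdeal R) (tr g)
      = (ψ g : R ⧸ maximalIdeal R) + (ψ' g : R ⧸ maximalIdeal R))
    (g₀ : G) (hg₀ : ψ g₀ ≠ ψ' g₀)
    (lamψ lamψ' : R)
    (hsum : lamψ + lamψ' = tr g₀)
    (hprod : algebraMap R K (lamψ * lamψ') = LinearMap.det (ρ g₀))
    (hlift : Ideal.Quotient.mk (maximalIdeal R) lamψ = (ψ g₀ : R ⧸ maximalIdeal R))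
    (hlift' : Ideal.Quotient.mk (maximalIdeal R) lamψ' = (ψ' g₀ : R ⧸ maximalIdeal R))
    (r : ℕ) (p : Fin r → Ideal R) (hp : ∀ i, IsHeightOnePrime (p i))
    (a : Fin r → ℕ)
    (T T' : Submodule R V)
    (hTfg : T.FG) (hTspan : Submodule.span K (T : Set V) = ⊤)
    (hTstab : ∀ g : G, ∀ v ∈ T, ρ g v ∈ T) (hTfree : Module.Free R T)
    (hT'fg : T'.FG) (hT'span : Submodule.span K (T' : Set V) = ⊤)
    (hT'stab : ∀ g : G, ∀ v ∈ T', ρ g v ∈ T') (hT'free : Module.Free R T')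
    (hle : T ≤ T')
    -- `T'/T` is cyclic:
    (hcyc : ∃ w ∈ T', ∀ v ∈ T', ∃ c : R, v - c • w ∈ T)
    -- `G` acts on `T'/T` through a character lifting `ψ`, via the lift `t : G → R`:
    (t : G → R)
    (htlift : ∀ g, Ideal.Quotient.mk (maximalIdeal R) (t g)
      = (ψ g : R ⧸ maximalIdeal R))
    (hact : ∀ g : G, ∀ v ∈ T', ρ g v - t g • v ∈ T)
    -- `char_R(T'/T) = ∏ᵢ pᵢ^{aᵢ}`:
    (hchariso : Nonempty (quotMod T T' ≃ₗ[R] R ⧸ (∏ i, (p i) ^ (a i) : Ideal R))) :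
    Submodule.map ((eigProj R (ρ g₀) lamψ' lamψ).restrictScalars R) T
      = Submodule.map ((eigProj R (ρ g₀) lamψ' lamψ).restrictScalars R) T' ∧
    (∏ i, (p i) ^ (a i) : Ideal R) •
        Submodule.map ((eigProj R (ρ g₀) lamψ lamψ').restrictScalars R) T'
      = Submodule.map ((eigProj R (ρ g₀) lamψ lamψ').restrictScalars R) T :=
  eigcomponents_of_sublattice_general hdim ρ tr htr ψ ψ' g₀ hg₀ lamψ lamψ' hsum hprod hlift hlift' r
    p a T T' hTstab hT'fg hT'stab hT'free hle t htlift hact hchariso
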